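/- In R = ℂ[[x,y]] (two variables), the ideal 𝔪² = (x², xy, y²) is T-full (indeed Δ(𝔪²) = 𝔪³ and T(𝔪³) = 𝔪²), but 𝔪² is not a Tjurina ideal: there is no f ∈ ℂ[[x,y]] with T(f) = (x², xy, y²). In particular, T-fullness is not a sufficient condition for being a Tjurina ideal. -/

import Mathlib

/-- The partial derivative `∂f/∂xⱼ` of a formal power series `f ∈ ℂ[[x₁,…,xₙ]]`,
defined coefficientwise. -/
noncomputable def pd {n : ℕ} (j : Fin n) (f : MvPowerSeries (Fin n) ℂ) :
    MvPowerSeries (Fin n) ℂ :=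
  fun d => ((d j + 1 : ℕ) : ℂ) * MvPowerSeries.coeff (R := ℂ) (d + Finsupp.single j 1) f

/-- The Tjurina ideal `T(f) = (f, ∂f/∂x₁, …, ∂f/∂xₙ)`. -/
noncomputable def Tj {n : ℕ} (f : MvPowerSeries (Fin n) ℂ) : Ideal (MvPowerSeries (Fin n) ℂ) :=
  Ideal.span ({f} ∪ Set.range fun j => pd j f)

/-- The set of antiderivatives `Δ(I) = {f : T(f) ⊆ I}`. -/
def Del {n : ℕ} (I : Ideal (MvPowerSeries (Fin n) ℂ)) : Set (MvPowerSeries (Fin n) ℂ) :=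
  {f | Tj f ≤ I}

/-- The Tjurina ideal of an arbitrary set of power series (for an ideal `J`, applied to its
carrier this computes `T(J) = T(g₁) + … + T(g_q)` for any system of generators). -/
noncomputable def Tset {n : ℕ} (A : Set (MvPowerSeries (Fin n) ℂ)) :
    Ideal (MvPowerSeries (Fin n) ℂ) :=
  Ideal.span (A ∪ {g | ∃ f ∈ A, ∃ j, g = pd j f})

/-- The maximal ideal `𝔪 = (x₁,…,xₙ)` of `ℂ[[x₁,…,xₙ]]`. -/
noncomputable def mm (n : ℕ) : Ideal (MvPowerSeries (Fin n) ℂ) :=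
  Ideal.span (Set.range (MvPowerSeries.X : Fin n → MvPowerSeries (Fin n) ℂ))

/-!
In `ℂ[[x₁,…,xₙ]]` the power `𝔪ᵏ` is exactly the ideal of series of order `≥ k`: the nontrivial
inclusion comes from Euler's identity `f = ∑ xᵢ ∂ᵢ g`, where `g` divides each homogeneous part of
`f` by its degree. Partial derivatives lower the order by one, and in characteristic zero a series
without constant term whose partials have order `≥ k` has order `≥ k + 1`; hence
`Δ(𝔪ᵏ⁺¹) = 𝔪ᵏ⁺²`. Every series is `∂₀` of an antiderivative of one order more, so
`T(𝔪ᵏ⁺¹) = 𝔪ᵏ`.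

If `T(f) = 𝔪²`, then `f ∈ Δ(𝔪²) = 𝔪³`, so modulo `𝔪³` the ideal `T(f)` is spanned over `ℂ` by the
quadratic parts of the `n` partials of `f`, which cannot fill the space of quadratic forms as soon
as `n ≥ 2`.
-/

open Finsupp

theorem Finsupp.exists_eq_add_single_one {σ : Type*} {d : σ →₀ ℕ} {i : σ} (h : d i ≠ 0) :
    ∃ e, d = e + single i 1 :=
  ⟨d - single i 1, (tsub_add_cancel_of_le (single_le_iff.mpr (Nat.one_le_iff_ne_zero.mpr h))).symm⟩

theorem Finsupp.exists_injective_option_degree_eq_two {σ : Type*} {i j : σ} (hij : i ≠ j) :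
    ∃ e : Option σ → σ →₀ ℕ, Function.Injective e ∧ ∀ t, degree (e t) = 2 := by
  let e : Option σ → σ →₀ ℕ := fun t => t.elim (single j 2) fun l => single i 1 + single l 1
  have h_none : e none i = 0 := by simp [e, hij]
  have h_some : ∀ l, e (Option.some l) i ≠ 0 := by simp [e]
  refine ⟨e, ?_, by rintro (_ | l) <;> simp [e, degree_single]⟩
  rintro (_ | l) (_ | l') h
  · rfl
  · exact absurd (h_none ▸ DFunLike.congr_fun h i).symm (h_some l')
  · exact absurd (h_none ▸ DFunLike.congr_fun h i) (h_some l)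
  · exact congrArg Option.some (single_left_injective one_ne_zero (add_left_cancel h))

namespace MvPowerSeries

variable {σ R : Type*} [CommSemiring R]

def orderIdeal (k : ℕ) : Ideal (MvPowerSeries σ R) where
  carrier := {f | (k : ℕ∞) ≤ f.order}
  add_mem' {f g} hf hg := le_trans (le_min hf hg) min_order_le_add
  zero_mem' := by simp
  smul_mem' a f hf := le_trans (le_add_left hf) le_order_mul

theorem mem_orderIdeal {k : ℕ} {f : MvPowerSeries σ R} :
    f ∈ orderIdeal k ↔ ∀ d : σ →₀ ℕ, degree d < k → coeff d f = 0 :=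
  ⟨fun hf _ hd => coeff_of_lt_order (lt_of_lt_of_le (by exact_mod_cast hd) hf), nat_le_order⟩

theorem orderIdeal_zero : orderIdeal 0 = (⊤ : Ideal (MvPowerSeries σ R)) :=
  eq_top_iff.mpr fun _ _ => mem_orderIdeal.mpr fun _ hd => absurd hd (Nat.not_lt_zero _)

theorem orderIdeal_antitone : Antitone (orderIdeal : ℕ → Ideal (MvPowerSeries σ R)) :=
  fun _ _ hkl _ hf => mem_orderIdeal.mpr fun d hd => mem_orderIdeal.mp hf d (by omega)

theorem orderIdeal_mul_le (k l : ℕ) :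
    orderIdeal k * orderIdeal l ≤ (orderIdeal (k + l) : Ideal (MvPowerSeries σ R)) :=
  Ideal.mul_le.mpr fun f hf g hg => le_trans (by push_cast; exact add_le_add hf hg) le_order_mul

theorem X_mem_orderIdeal_one (i : σ) : (X i : MvPowerSeries σ R) ∈ orderIdeal 1 :=
  mem_orderIdeal.mpr fun d hd => by
    classical
    rw [coeff_X, if_neg]
    rintro rfl
    simp [degree_single] at hd

theorem span_range_X_pow_le_orderIdeal (k : ℕ) :
    Ideal.span (Set.range (X : σ → MvPowerSeries σ R)) ^ k ≤ orderIdeal k := by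
  induction k with
  | zero => simp [orderIdeal_zero]
  | succ k ih =>
    calc _ = Ideal.span (Set.range X) ^ k * Ideal.span (Set.range X) := pow_succ _ _
      _ ≤ orderIdeal k * orderIdeal 1 :=
          Ideal.mul_mono ih (Ideal.span_le.mpr (Set.range_subset_iff.mpr X_mem_orderIdeal_one))
      _ ≤ orderIdeal (k + 1) := orderIdeal_mul_le k 1

theorem monomial_mem_orderIdeal {k : ℕ} {d : σ →₀ ℕ} (hd : k ≤ degree d) (a : R) :
    monomial d a ∈ orderIdeal k :=
  mem_orderIdeal.mpr fun d' hd' => by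
    classical
    rw [coeff_monomial, if_neg]
    rintro rfl
    omega

theorem coeff_mul_of_mem_orderIdeal {m : ℕ} {g : MvPowerSeries σ R} (hg : g ∈ orderIdeal m)
    (a : MvPowerSeries σ R) {d : σ →₀ ℕ} (hd : degree d = m) :
    coeff d (a * g) = constantCoeff a * coeff d g := by
  classical
  rw [coeff_mul, Finset.sum_eq_single (0, d)]
  · rw [coeff_zero_eq_constantCoeff_apply]
  · rintro ⟨u, v⟩ huv hne
    rw [Finset.HasAntidiagonal.mem_antidiagonal] at huv
    dsimp only at huv ⊢
    have hu : u ≠ 0 := by rintro rfl; simp_all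
    have hv : degree v < m := by
      rw [← hd, ← huv, map_add]
      have := (degree_eq_zero_iff u).not.mpr hu
      omega
    rw [mem_orderIdeal.mp hg v hv, mul_zero]
  · simp

theorem sum_coeff_eq_zero_of_mem_span {ι : Type*} [Fintype ι] {m : ℕ} {e : ι → σ →₀ ℕ}
    (he : ∀ t, degree (e t) = m) (c : ι → R) {S : Set (MvPowerSeries σ R)}
    (hS : ∀ s ∈ S, s ∈ orderIdeal m ∧ ∑ t, c t * coeff (e t) s = 0)
    {g : MvPowerSeries σ R} (hg : g ∈ Ideal.span S) : ∑ t, c t * coeff (e t) g = 0 := by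
  refine (Submodule.span_induction
    (p := fun g _ => g ∈ orderIdeal m ∧ ∑ t, c t * coeff (e t) g = 0)
    hS ⟨zero_mem _, by simp⟩ ?_ ?_ hg).2
  · rintro g₁ g₂ - - ⟨h₁, s₁⟩ ⟨h₂, s₂⟩
    refine ⟨add_mem h₁ h₂, ?_⟩
    simp only [map_add, mul_add, Finset.sum_add_distrib, s₁, s₂, add_zero]
  · rintro a g - ⟨hg, sg⟩
    refine ⟨Ideal.mul_mem_left _ a hg, ?_⟩
    simp only [smul_eq_mul, coeff_mul_of_mem_orderIdeal hg a (he _), mul_left_comm (c _),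
      ← Finset.mul_sum, sg, mul_zero]

theorem pderiv_mem_orderIdeal {k : ℕ} {f : MvPowerSeries σ R} (hf : f ∈ orderIdeal (k + 1))
    (i : σ) : pderiv R i f ∈ orderIdeal k :=
  mem_orderIdeal.mpr fun d hd => by
    rw [coeff_pderiv, mem_orderIdeal.mp hf _ (by rw [map_add, degree_single]; omega), zero_mul]

theorem coeff_X_mul_pderiv (i : σ) (f : MvPowerSeries σ R) (d : σ →₀ ℕ) :
    coeff d (X i * pderiv R i f) = d i * coeff d f := by
  rw [X_def, coeff_monomial_mul, one_mul]
  by_cases hd : d i = 0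
  · rw [if_neg (fun h => by simpa [hd] using single_le_iff.mp h), hd, Nat.cast_zero, zero_mul]
  · obtain ⟨e, rfl⟩ := exists_eq_add_single_one hd
    rw [if_pos le_add_self, add_tsub_cancel_right, coeff_pderiv, mul_comm]
    simp

theorem coeff_sum_X_mul_pderiv [Fintype σ] (f : MvPowerSeries σ R) (d : σ →₀ ℕ) :
    coeff d (∑ i, X i * pderiv R i f) = degree d * coeff d f := by
  simp only [map_sum, coeff_X_mul_pderiv, ← Finset.sum_mul, degree_eq_sum, Nat.cast_sum]

section Field

variable {K : Type*} [Field K]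

/-- The antiderivative vanishing on `{xᵢ = 0}`: where `d i = 0` the factor `(d i)⁻¹` is the junk
value `0⁻¹ = 0`. -/
noncomputable def antideriv (i : σ) (f : MvPowerSeries σ K) : MvPowerSeries σ K :=
  fun d => (d i : K)⁻¹ * coeff (d - single i 1) f

theorem antideriv_mem_orderIdeal {k : ℕ} {f : MvPowerSeries σ K} (hf : f ∈ orderIdeal k)
    (i : σ) : antideriv i f ∈ orderIdeal (k + 1) :=
  mem_orderIdeal.mpr fun d hd => by
    show (d i : K)⁻¹ * coeff (d - single i 1) f = 0
    by_cases hi : d i = 0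
    · rw [hi, Nat.cast_zero, inv_zero, zero_mul]
    obtain ⟨e, rfl⟩ := exists_eq_add_single_one hi
    rw [add_tsub_cancel_right, mem_orderIdeal.mp hf e (by rw [map_add, degree_single] at hd; omega),
      mul_zero]

variable [CharZero K]

theorem pderiv_antideriv (i : σ) (f : MvPowerSeries σ K) : pderiv K i (antideriv i f) = f := by
  ext d
  rw [coeff_pderiv]
  show (((d + single i 1 : σ →₀ ℕ) i : ℕ) : K)⁻¹ * coeff (d + single i 1 - single i 1) f *
      (d i + 1) = coeff d f
  rw [add_tsub_cancel_right, Finsupp.add_apply, single_eq_same, Nat.cast_add_one,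
    mul_right_comm, inv_mul_cancel₀ (Nat.cast_add_one_ne_zero _), one_mul]

theorem mem_orderIdeal_succ_of_pderiv_mem {k : ℕ} {f : MvPowerSeries σ K}
    (hf : f ∈ orderIdeal 1) (h : ∀ i, pderiv K i f ∈ orderIdeal k) : f ∈ orderIdeal (k + 1) :=
  mem_orderIdeal.mpr fun d hd => by
    obtain rfl | hd0 := eq_or_ne d 0
    · exact mem_orderIdeal.mp hf 0 (by simp)
    obtain ⟨i, hi⟩ := Finsupp.ne_iff.mp hd0
    obtain ⟨e, rfl⟩ := exists_eq_add_single_one hi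
    have he := mem_orderIdeal.mp (h i) e (by rw [map_add, degree_single] at hd; omega)
    rw [coeff_pderiv] at he
    exact (mul_eq_zero.mp he).resolve_right (Nat.cast_add_one_ne_zero _)

theorem orderIdeal_succ_le_span_range_X_mul [Fintype σ] (k : ℕ) :
    orderIdeal (k + 1) ≤ Ideal.span (Set.range (X : σ → MvPowerSeries σ K)) * orderIdeal k := by
  intro f hf
  -- `g` inverts the Euler operator `∑ i, X i * ∂ᵢ` on `f`; the junk value `0⁻¹ = 0` only meets
  -- the constant term of `f`, which vanishes anyway
  let g : MvPowerSeries σ K := fun d => ((degree d : ℕ) : K)⁻¹ * coeff d f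
  have hg : g ∈ orderIdeal (k + 1) := mem_orderIdeal.mpr fun d hd => by
    show ((degree d : ℕ) : K)⁻¹ * coeff d f = 0
    rw [mem_orderIdeal.mp hf d hd, mul_zero]
  have hfg : f = ∑ i, X i * pderiv K i g := by
    ext d
    rw [coeff_sum_X_mul_pderiv]
    show coeff d f = degree d * (((degree d : ℕ) : K)⁻¹ * coeff d f)
    obtain hd | hd := eq_or_ne (degree d) 0
    · rw [mem_orderIdeal.mp hf d (by omega), mul_zero, mul_zero]
    · rw [mul_inv_cancel_left₀ (Nat.cast_ne_zero.mpr hd)]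
  rw [hfg]
  exact Ideal.sum_mem _ fun i _ =>
    Ideal.mul_mem_mul (Ideal.subset_span ⟨i, rfl⟩) (pderiv_mem_orderIdeal hg i)

theorem span_range_X_pow_eq_orderIdeal [Fintype σ] (k : ℕ) :
    Ideal.span (Set.range (X : σ → MvPowerSeries σ K)) ^ k = orderIdeal k := by
  refine le_antisymm (span_range_X_pow_le_orderIdeal k) ?_
  induction k with
  | zero => simp [orderIdeal_zero]
  | succ k ih =>
    calc orderIdeal (k + 1) ≤ Ideal.span (Set.range X) * orderIdeal k :=
          orderIdeal_succ_le_span_range_X_mul k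
      _ ≤ Ideal.span (Set.range X) * Ideal.span (Set.range X) ^ k := Ideal.mul_mono_right ih
      _ = Ideal.span (Set.range X) ^ (k + 1) := (pow_succ' _ _).symm

end Field

end MvPowerSeries

open MvPowerSeries

section Tjurina

variable {n : ℕ}

theorem pd_eq_pderiv (j : Fin n) (f : MvPowerSeries (Fin n) ℂ) : pd j f = pderiv ℂ j f := by
  ext d
  rw [coeff_pderiv, mul_comm]
  show ((d j + 1 : ℕ) : ℂ) * coeff (d + single j 1) f = _
  push_cast
  rfl

theorem Tj_le_iff {f : MvPowerSeries (Fin n) ℂ} {I : Ideal (MvPowerSeries (Fin n) ℂ)} :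
    Tj f ≤ I ↔ f ∈ I ∧ ∀ j, pderiv ℂ j f ∈ I := by
  simp only [Tj, Ideal.span_le, Set.union_subset_iff, Set.singleton_subset_iff,
    Set.range_subset_iff, SetLike.mem_coe, pd_eq_pderiv]

theorem Tset_le_iff {A : Set (MvPowerSeries (Fin n) ℂ)} {I : Ideal (MvPowerSeries (Fin n) ℂ)} :
    Tset A ≤ I ↔ A ⊆ I ∧ ∀ f ∈ A, ∀ j, pderiv ℂ j f ∈ I := by
  rw [Tset, Ideal.span_le, Set.union_subset_iff]
  refine and_congr_right' ⟨fun h f hf j => h ⟨f, hf, j, (pd_eq_pderiv j f).symm⟩, ?_⟩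
  rintro h _ ⟨f, hf, j, rfl⟩
  exact (pd_eq_pderiv j f).symm ▸ h f hf j

theorem pderiv_mem_Tset {A : Set (MvPowerSeries (Fin n) ℂ)} {f : MvPowerSeries (Fin n) ℂ}
    (hf : f ∈ A) (j : Fin n) : pderiv ℂ j f ∈ Tset A :=
  Ideal.subset_span (Or.inr ⟨f, hf, j, (pd_eq_pderiv j f).symm⟩)

theorem mm_pow_eq_orderIdeal (k : ℕ) : mm n ^ k = orderIdeal k :=
  span_range_X_pow_eq_orderIdeal k

theorem Del_mm_pow_succ (k : ℕ) : Del (mm n ^ (k + 1)) = ↑(mm n ^ (k + 2)) := by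
  ext f
  change Tj f ≤ _ ↔ f ∈ mm n ^ (k + 2)
  rw [Tj_le_iff, mm_pow_eq_orderIdeal, mm_pow_eq_orderIdeal]
  exact ⟨fun ⟨hf, hpd⟩ => mem_orderIdeal_succ_of_pderiv_mem (orderIdeal_antitone (by omega) hf) hpd,
    fun hf => ⟨orderIdeal_antitone (by omega) hf, pderiv_mem_orderIdeal hf⟩⟩

theorem Tset_mm_pow_succ [NeZero n] (k : ℕ) : Tset ↑(mm n ^ (k + 1)) = mm n ^ k := by
  simp only [le_antisymm_iff, Tset_le_iff, SetLike.coe_subset_coe, SetLike.mem_coe,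
    mm_pow_eq_orderIdeal]
  refine ⟨⟨orderIdeal_antitone (by omega), fun f hf => pderiv_mem_orderIdeal hf⟩, fun f hf => ?_⟩
  rw [← pderiv_antideriv 0 f]
  exact pderiv_mem_Tset (antideriv_mem_orderIdeal hf 0) 0

theorem not_exists_mm_sq_eq_Tj (hn : 2 ≤ n) :
    ¬ ∃ f : MvPowerSeries (Fin n) ℂ, mm n ^ 2 = Tj f := by
  rintro ⟨f, hf⟩
  have hf3 : f ∈ orderIdeal 3 := by
    have : f ∈ Del (mm n ^ 2) := hf.ge
    rwa [Del_mm_pow_succ, SetLike.mem_coe, mm_pow_eq_orderIdeal] at this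
  -- `n + 1` exponents of degree 2 give `n + 1` vectors of coefficients of the `n` partials of `f`;
  -- a linear relation among them then holds on all of `T(f) = 𝔪²`, which contains each monomial
  obtain ⟨e, he_inj, he⟩ :=
    exists_injective_option_degree_eq_two (show (⟨0, by omega⟩ : Fin n) ≠ ⟨1, hn⟩ by simp)
  obtain ⟨c, hc, t₀, ht₀⟩ := Fintype.not_linearIndependent_iff.mp fun hv => by
    simpa using hv.fintype_card_le_finrank (R := ℂ) (b := fun t l => coeff (e t) (pderiv ℂ l f))
  have hrel : ∑ t, c t * coeff (e t) (monomial (e t₀) (1 : ℂ)) = 0 := by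
    refine sum_coeff_eq_zero_of_mem_span he c (S := {f} ∪ Set.range fun j => pd j f) ?_ ?_
    · rintro s (rfl | ⟨l, rfl⟩)
      · exact ⟨orderIdeal_antitone (by omega) hf3,
          Finset.sum_eq_zero fun t _ => by
            rw [mem_orderIdeal.mp hf3 _ (by rw [he]; omega), mul_zero]⟩
      · dsimp only
        rw [pd_eq_pderiv]
        exact ⟨pderiv_mem_orderIdeal hf3 l, by simpa using congr_fun hc l⟩
    · show _ ∈ Tj f
      rw [← hf, mm_pow_eq_orderIdeal]
      exact monomial_mem_orderIdeal (he t₀).ge 1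
  exact ht₀ (by simpa [coeff_monomial, he_inj.eq_iff] using hrel)

end Tjurina

/-- in `ℂ[[x,y]]`, `Δ(𝔪²) = 𝔪³`, `T(𝔪³) = 𝔪²` (so `𝔪²` is T-full),
yet `𝔪²` is not a Tjurina ideal. -/
theorem stmt_16 :
    Del (mm 2 ^ 2) = ↑(mm 2 ^ 3) ∧
    Tset ↑(mm 2 ^ 3) = mm 2 ^ 2 ∧
    ¬ ∃ f : MvPowerSeries (Fin 2) ℂ, mm 2 ^ 2 = Tj f :=
  ⟨Del_mm_pow_succ 1, Tset_mm_pow_succ 2, not_exists_mm_sq_eq_Tj le_rfl⟩
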